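/- arXiv:2601.13071 — 2 statements merged into one kernel-verified Lean document; each statement's English description precedes it below -/
import Mathlib

section
/- Let s be an r×r Hermitian complex matrix (r ≥ 1) and set h = exp(s). Then log((tr h + tr h⁻¹)/(2r)) ≤ ‖s‖_F ≤ √r · log(tr h + tr h⁻¹), where ‖s‖_F = √(tr(s²)) is the Frobenius norm. Here tr h and tr h⁻¹ are real and tr h + tr h⁻¹ ≥ 2r, so both logarithms are well-defined and the right-hand side is nonnegative. -/
/-!
Diagonalising `s = U diag(λ) U*` gives `tr h + tr h⁻¹ = ∑ᵢ (e^{λᵢ} + e^{-λᵢ})` and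
`tr s² = ∑ᵢ λᵢ²`, so both bounds are statements about the real vector `λ`: each summand
`e^{λᵢ} + e^{-λᵢ}` lies between `e^{|λᵢ|}` and `2 e^{|λᵢ|}`, while
`max |λᵢ| ≤ ‖λ‖₂ ≤ √r · max |λᵢ|`.
-/

open Finset Real Unitary

section ExpAddExpNeg

variable {ι : Type*} [Fintype ι] (x : ι → ℝ)

lemma two_mul_card_le_sum_exp_add_exp_neg :
    2 * (Fintype.card ι : ℝ) ≤ ∑ i, (exp (x i) + exp (-x i)) := by
  have h2 (i : ι) : 2 ≤ exp (x i) + exp (-x i) := by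
    linarith [one_le_cosh (x i), cosh_eq (x i)]
  simpa [mul_comm] using card_nsmul_le_sum univ _ 2 fun i _ => h2 i

lemma abs_le_sqrt_sum_sq (i : ι) : |x i| ≤ √(∑ j, x j ^ 2) :=
  abs_le_sqrt (single_le_sum (fun j _ => sq_nonneg (x j)) (mem_univ i))

lemma log_sum_exp_add_exp_neg_div_le_sqrt_sum_sq :
    log ((∑ i, (exp (x i) + exp (-x i))) / (2 * Fintype.card ι)) ≤ √(∑ i, x i ^ 2) := by
  have hT : ∑ i, (exp (x i) + exp (-x i)) ≤ exp √(∑ i, x i ^ 2) * (2 * Fintype.card ι) := by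
    have hle (i : ι) : exp (x i) + exp (-x i) ≤ 2 * exp √(∑ i, x i ^ 2) := by
      have hx := abs_le_sqrt_sum_sq x i
      have h1 := exp_le_exp.2 ((le_abs_self (x i)).trans hx)
      have h2 := exp_le_exp.2 ((neg_le_abs (x i)).trans hx)
      linarith
    have hsum := sum_le_card_nsmul univ _ _ fun i _ => hle i
    rw [card_univ, nsmul_eq_mul] at hsum
    linarith
  have hT₀ : 0 ≤ ∑ i, (exp (x i) + exp (-x i)) := sum_nonneg fun i _ => by positivity
  obtain hzero | hpos := (div_nonneg hT₀ (by positivity : (0 : ℝ) ≤ 2 * Fintype.card ι)).eq_or_lt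
  · -- only possible for empty `ι`, where the junk value `log 0 = 0` saves the bound
    rw [← hzero, log_zero]
    exact sqrt_nonneg _
  · exact (log_le_iff_le_exp hpos).2 (div_le_of_le_mul₀ (by positivity) (exp_pos _).le hT)

lemma abs_le_log_sum_exp_add_exp_neg (i : ι) : |x i| ≤ log (∑ j, (exp (x j) + exp (-x j))) := by
  calc |x i| = log (exp |x i|) := (log_exp _).symm
    _ ≤ log (∑ j, (exp (x j) + exp (-x j))) :=
      log_le_log (exp_pos _) <| (exp_abs_le (x i)).trans <|
        single_le_sum (f := fun j => exp (x j) + exp (-x j)) (fun j _ => by positivity) (mem_univ i)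

lemma sqrt_sum_sq_le_sqrt_card_mul_log_sum_exp_add_exp_neg :
    √(∑ i, x i ^ 2) ≤ √(Fintype.card ι) * log (∑ i, (exp (x i) + exp (-x i))) := by
  rcases isEmpty_or_nonempty ι with hι | ⟨⟨i₀⟩⟩
  · simp
  have hlog := (abs_nonneg _).trans (abs_le_log_sum_exp_add_exp_neg x i₀)
  have hsq (i : ι) : x i ^ 2 ≤ log (∑ j, (exp (x j) + exp (-x j))) ^ 2 := by
    simpa only [sq_abs] using pow_le_pow_left₀ (abs_nonneg _) (abs_le_log_sum_exp_add_exp_neg x i) 2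
  calc √(∑ i, x i ^ 2)
      ≤ √(Fintype.card ι * log (∑ i, (exp (x i) + exp (-x i))) ^ 2) := by
        gcongr
        simpa using sum_le_card_nsmul univ _ _ fun i _ => hsq i
    _ = √(Fintype.card ι) * log (∑ i, (exp (x i) + exp (-x i))) := by
        rw [sqrt_mul (Nat.cast_nonneg _), sqrt_sq hlog]

end ExpAddExpNeg

namespace Matrix

variable {n : Type*} [Fintype n] [DecidableEq n]

lemma trace_conjStarAlgAut {R S : Type*} [CommRing R] [StarRing R] [SMul S (Matrix n n R)]
    [IsScalarTower S (Matrix n n R) (Matrix n n R)] [SMulCommClass S (Matrix n n R) (Matrix n n R)]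
    (U : unitary (Matrix n n R)) (A : Matrix n n R) :
    (conjStarAlgAut S _ U A).trace = A.trace := by
  rw [conjStarAlgAut_apply, trace_mul_cycle, coe_star_mul_self, one_mul]

lemma exp_conjStarAlgAut {𝔸 S : Type*} [NormedRing 𝔸] [NormedAlgebra ℚ 𝔸] [CompleteSpace 𝔸]
    [StarRing 𝔸] [SMul S (Matrix n n 𝔸)]
    [IsScalarTower S (Matrix n n 𝔸) (Matrix n n 𝔸)] [SMulCommClass S (Matrix n n 𝔸) (Matrix n n 𝔸)]
    (U : unitary (Matrix n n 𝔸)) (A : Matrix n n 𝔸) :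
    NormedSpace.exp (conjStarAlgAut S _ U A) = conjStarAlgAut S _ U (NormedSpace.exp A) :=
  exp_units_conj (toUnits U) A

variable {𝕜 : Type*} [RCLike 𝕜]

lemma trace_exp_conjStarAlgAut_diagonal_ofReal (U : unitary (Matrix n n 𝕜)) (d : n → ℝ) :
    (NormedSpace.exp (conjStarAlgAut 𝕜 _ U (diagonal (RCLike.ofReal ∘ d)))).trace =
      ((∑ i, Real.exp (d i) : ℝ) : 𝕜) := by
  rw [exp_conjStarAlgAut, trace_conjStarAlgAut, exp_diagonal, trace_diagonal]
  push_cast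
  refine sum_congr rfl fun i _ => ?_
  simp [Real.exp_eq_exp_ℝ, ← RCLike.algebraMap_eq_ofReal, NormedSpace.algebraMap_exp_comm]

namespace IsHermitian

variable {A : Matrix n n 𝕜} (hA : A.IsHermitian)

lemma trace_exp : (NormedSpace.exp A).trace = ((∑ i, Real.exp (hA.eigenvalues i) : ℝ) : 𝕜) := by
  conv_lhs => rw [hA.spectral_theorem]
  exact trace_exp_conjStarAlgAut_diagonal_ofReal _ _

lemma trace_exp_neg :
    (NormedSpace.exp (-A)).trace = ((∑ i, Real.exp (-hA.eigenvalues i) : ℝ) : 𝕜) := by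
  have hneg : -A = conjStarAlgAut 𝕜 _ hA.eigenvectorUnitary
      (diagonal (RCLike.ofReal ∘ (-hA.eigenvalues))) := by
    conv_lhs => rw [hA.spectral_theorem, ← map_neg, diagonal_neg]
    simp [Function.comp_def]
  rw [hneg, trace_exp_conjStarAlgAut_diagonal_ofReal]
  rfl

lemma trace_mul_self : (A * A).trace = ((∑ i, hA.eigenvalues i ^ 2 : ℝ) : 𝕜) := by
  conv_lhs => rw [hA.spectral_theorem]
  rw [← map_mul, trace_conjStarAlgAut, diagonal_mul_diagonal, trace_diagonal]
  push_cast
  simp [sq]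

end IsHermitian

end Matrix

theorem stmt2_general (r : ℕ) (s : Matrix (Fin r) (Fin r) ℂ)
    (hs : s.IsHermitian) :
    ((NormedSpace.exp s).trace + (NormedSpace.exp s)⁻¹.trace).im = 0 ∧
    (2 * (r : ℝ) ≤ ((NormedSpace.exp s).trace + (NormedSpace.exp s)⁻¹.trace).re) ∧
    Real.log (((NormedSpace.exp s).trace + (NormedSpace.exp s)⁻¹.trace).re / (2 * r))
      ≤ Real.sqrt ((s * s).trace.re) ∧
    Real.sqrt ((s * s).trace.re)
      ≤ Real.sqrt r *
        Real.log (((NormedSpace.exp s).trace + (NormedSpace.exp s)⁻¹.trace).re) := by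
  rw [← Matrix.exp_neg, hs.trace_exp, hs.trace_exp_neg, hs.trace_mul_self, ← RCLike.ofReal_add,
    ← sum_add_distrib]
  simp only [Complex.coe_algebraMap, Complex.ofReal_re, Complex.ofReal_im, true_and]
  simpa only [Fintype.card_fin] using
    (⟨two_mul_card_le_sum_exp_add_exp_neg hs.eigenvalues,
      log_sum_exp_add_exp_neg_div_le_sqrt_sum_sq hs.eigenvalues,
      sqrt_sum_sq_le_sqrt_card_mul_log_sum_exp_add_exp_neg hs.eigenvalues⟩ : _ ∧ _ ∧ _)

/-- For a Hermitian `r×r` matrix `s` with `h = exp s`: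
`log((tr h + tr h⁻¹)/(2r)) ≤ ‖s‖_F ≤ √r · log(tr h + tr h⁻¹)`,
where `‖s‖_F = √(tr(s²))`; moreover `tr h + tr h⁻¹` is real and `≥ 2r`. -/
theorem stmt2 (r : ℕ) (hr : 1 ≤ r) (s : Matrix (Fin r) (Fin r) ℂ)
    (hs : s.IsHermitian) :
    ((NormedSpace.exp s).trace + (NormedSpace.exp s)⁻¹.trace).im = 0 ∧
    (2 * (r : ℝ) ≤ ((NormedSpace.exp s).trace + (NormedSpace.exp s)⁻¹.trace).re) ∧
    Real.log (((NormedSpace.exp s).trace + (NormedSpace.exp s)⁻¹.trace).re / (2 * r))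
      ≤ Real.sqrt ((s * s).trace.re) ∧
    Real.sqrt ((s * s).trace.re)
      ≤ Real.sqrt r *
        Real.log (((NormedSpace.exp s).trace + (NormedSpace.exp s)⁻¹.trace).re) :=
  stmt2_general r s hs
end

section
/- Let h : ℝ → (r×r complex matrices) be a differentiable path such that h(t) is Hermitian positive definite for all t and h'(t) = −2·h(t)·Φ(t), where each Φ(t) is Hermitian with operator norm ‖Φ(t)‖_op ≤ C. Then for all t, the derivative of t ↦ log(tr h(t) + tr h(t)⁻¹) is at most 2C. -/
/-!
Put `f = tr h + tr h⁻¹`. Along the flow, `f' = -2 tr (h Φ) + 2 tr (Φ h⁻¹)`. In the Loewner order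
`-‖Φ‖ ≤ Φ ≤ ‖Φ‖`, and the trace of a product of two positive semidefinite matrices is nonnegative,
so `-tr (h Φ) ≤ ‖Φ‖ tr h` and `tr (Φ h⁻¹) ≤ ‖Φ‖ tr h⁻¹`. Hence `f' ≤ 2C f`, that is `(log f)' ≤ 2C`.
-/

open scoped ComplexOrder Matrix.Norms.L2Operator

lemma deriv_log_le_of_hasDerivAt {f : ℝ → ℝ} {f' K t : ℝ} (hf : HasDerivAt f f' t)
    (hpos : 0 < f t) (hle : f' ≤ K * f t) : deriv (fun u => Real.log (f u)) t ≤ K := by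
  rw [(hf.log hpos.ne').deriv, div_le_iff₀ hpos]
  exact hle

namespace Matrix

variable {m n : Type*} [Fintype m] [Fintype n]

lemma PosDef.re_trace_pos [Nonempty n] {A : Matrix n n ℂ} (hA : A.PosDef) : 0 < A.trace.re :=
  (Complex.lt_def.mp hA.trace_pos).1

variable [DecidableEq n]

section Order
open scoped MatrixOrder

lemma PosSemidef.trace_mul_nonneg {𝕜 : Type*} [RCLike 𝕜] {A B : Matrix n n 𝕜}
    (hA : A.PosSemidef) (hB : B.PosSemidef) : 0 ≤ (A * B).trace := by
  rw [← CFC.sqrt_mul_sqrt_self A (nonneg_iff_posSemidef.mpr hA), trace_mul_cycle, trace_mul_comm,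
    ← mul_assoc]
  exact (nonneg_iff_posSemidef.mp
    (conjugate_nonneg_of_nonneg (nonneg_iff_posSemidef.mpr hB) (CFC.sqrt_nonneg A))).trace_nonneg

lemma PosSemidef.re_trace_mul_le {A Φ : Matrix n n ℂ} (hA : A.PosSemidef) (hΦ : Φ.IsHermitian) :
    (A * Φ).trace.re ≤ ‖Φ‖ * A.trace.re := by
  have := hA.trace_mul_nonneg (le_iff.mp (IsSelfAdjoint.le_algebraMap_norm_self hΦ))
  rw [Algebra.algebraMap_eq_smul_one, mul_sub, trace_sub, mul_smul_comm, mul_one, trace_smul] at this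
  simpa using Complex.re_le_re this

end Order

lemma PosDef.deriv_trace_add_trace_inv_le {A Φ : Matrix n n ℂ} (hA : A.PosDef)
    (hΦ : Φ.IsHermitian) :
    ((-2 : ℂ) • (A * Φ)).trace.re - (A⁻¹ * ((-2 : ℂ) • (A * Φ)) * A⁻¹).trace.re
      ≤ 2 * ‖Φ‖ * (A.trace.re + A⁻¹.trace.re) := by
  have hconj : A⁻¹ * ((-2 : ℂ) • (A * Φ)) * A⁻¹ = (-2 : ℂ) • (Φ * A⁻¹) := by
    rw [Matrix.mul_smul, Matrix.smul_mul, ← mul_assoc,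
      nonsing_inv_mul A ((isUnit_iff_isUnit_det A).mp hA.isUnit), one_mul]
  calc ((-2 : ℂ) • (A * Φ)).trace.re - (A⁻¹ * ((-2 : ℂ) • (A * Φ)) * A⁻¹).trace.re
      = 2 * ((A * -Φ).trace.re + (A⁻¹ * Φ).trace.re) := by
        rw [hconj, trace_smul, trace_smul, mul_neg, trace_neg, trace_mul_comm Φ]
        simp only [smul_eq_mul, Complex.mul_re, Complex.neg_re]
        norm_num
        ring
    _ ≤ 2 * (‖-Φ‖ * A.trace.re + ‖Φ‖ * A⁻¹.trace.re) := by
        gcongr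
        · exact hA.posSemidef.re_trace_mul_le hΦ.neg
        · exact hA.inv.posSemidef.re_trace_mul_le hΦ
    _ = 2 * ‖Φ‖ * (A.trace.re + A⁻¹.trace.re) := by
        rw [norm_neg]
        ring

lemma hasDerivAt_of_hasDerivAt_apply {h : ℝ → Matrix m n ℂ} {h' : Matrix m n ℂ} {t : ℝ}
    (hd : ∀ i j, HasDerivAt (fun u => h u i j) (h' i j) t) : HasDerivAt h h' t := by
  let e : (m → n → ℂ) ≃L[ℝ] Matrix m n ℂ := (ofLinearEquiv ℝ).toContinuousLinearEquiv
  have hpi : HasDerivAt (fun u i j => h u i j) (fun i j => h' i j) t :=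
    hasDerivAt_pi.mpr fun i => hasDerivAt_pi.mpr (hd i)
  exact e.hasFDerivAt.comp_hasDerivAt t hpi

lemma _root_.HasDerivAt.matrix_trace {h : ℝ → Matrix n n ℂ} {h' : Matrix n n ℂ} {t : ℝ}
    (hd : HasDerivAt h h' t) : HasDerivAt (fun u => (h u).trace) h'.trace t :=
  ((traceLinearMap n ℂ ℂ).toContinuousLinearMap.restrictScalars ℝ).hasFDerivAt.comp_hasDerivAt t hd

lemma _root_.HasDerivAt.matrix_inv {h : ℝ → Matrix n n ℂ} {h' : Matrix n n ℂ} {t : ℝ}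
    (hd : HasDerivAt h h' t) (hu : IsUnit (h t)) :
    HasDerivAt (fun u => (h u)⁻¹) (-((h t)⁻¹ * h' * (h t)⁻¹)) t := by
  have hinv := (hasFDerivAt_ringInverse (𝕜 := ℂ) hu.unit).restrictScalars ℝ |>.comp_hasDerivAt t hd
  simpa [nonsing_inv_eq_ringInverse, Function.comp_def, coe_units_inv] using hinv

lemma hasDerivAt_re_trace_add_re_trace_inv {h : ℝ → Matrix n n ℂ} {h' : Matrix n n ℂ} {t : ℝ}
    (hd : HasDerivAt h h' t) (hu : IsUnit (h t)) :
    HasDerivAt (fun u => (h u).trace.re + ((h u)⁻¹).trace.re)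
      (h'.trace.re - ((h t)⁻¹ * h' * (h t)⁻¹).trace.re) t := by
  have hre : HasDerivAt (fun u => (h u).trace.re) h'.trace.re t :=
    Complex.reCLM.hasFDerivAt.comp_hasDerivAt t hd.matrix_trace
  have hre_inv : HasDerivAt (fun u => ((h u)⁻¹).trace.re) (-((h t)⁻¹ * h' * (h t)⁻¹)).trace.re t :=
    Complex.reCLM.hasFDerivAt.comp_hasDerivAt t (hd.matrix_inv hu).matrix_trace
  simpa only [trace_neg, Complex.neg_re, ← sub_eq_add_neg] using hre.fun_add hre_inv

end Matrix

theorem stmt6_general (r : ℕ) (C : ℝ)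
    (h Φ : ℝ → Matrix (Fin r) (Fin r) ℂ)
    (hpos : ∀ t, (h t).PosDef)
    (hΦherm : ∀ t, (Φ t).IsHermitian)
    (hΦnorm : ∀ t, ‖Matrix.toEuclideanCLM (𝕜 := ℂ) (Φ t)‖ ≤ C)
    (hderiv : ∀ t, ∀ i j, HasDerivAt (fun u => h u i j)
      (((-2 : ℂ) • (h t * Φ t)) i j) t) :
    ∀ t, deriv (fun u => Real.log ((h u).trace.re + ((h u)⁻¹).trace.re)) t
      ≤ 2 * C := by
  intro t
  have hC : ‖Φ t‖ ≤ C := (Matrix.l2_opNorm_toEuclideanCLM (Φ t)).symm.trans_le (hΦnorm t)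
  rcases isEmpty_or_nonempty (Fin r) with hr | hr
  · -- for `r = 0` every trace vanishes, so the function is constant
    simpa [Matrix.trace] using (norm_nonneg _).trans hC
  set A := h t
  have hA := hpos t
  have htr := hA.re_trace_pos
  have htr_inv := hA.inv.re_trace_pos
  have hd := Matrix.hasDerivAt_re_trace_add_re_trace_inv
    (Matrix.hasDerivAt_of_hasDerivAt_apply (hderiv t)) hA.isUnit
  refine deriv_log_le_of_hasDerivAt hd (by positivity) ?_
  calc _ ≤ 2 * ‖Φ t‖ * (A.trace.re + A⁻¹.trace.re) := hA.deriv_trace_add_trace_inv_le (hΦherm t)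
    _ ≤ 2 * C * (A.trace.re + A⁻¹.trace.re) := by gcongr

/-- If `h(t)` is a differentiable path of Hermitian positive definite matrices
with `h'(t) = −2·h(t)·Φ(t)` where each `Φ(t)` is Hermitian of operator norm
`≤ C`, then the derivative of `t ↦ log(tr h(t) + tr h(t)⁻¹)` is at most `2C`. -/
theorem stmt6 (r : ℕ) (C : ℝ)
    (h Φ : ℝ → Matrix (Fin r) (Fin r) ℂ)
    (hpos : ∀ t, (h t).PosDef)
    (hherm : ∀ t, (h t).IsHermitian)
    (hΦherm : ∀ t, (Φ t).IsHermitian)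
    (hΦnorm : ∀ t, ‖Matrix.toEuclideanCLM (𝕜 := ℂ) (Φ t)‖ ≤ C)
    (hderiv : ∀ t, ∀ i j, HasDerivAt (fun u => h u i j)
      (((-2 : ℂ) • (h t * Φ t)) i j) t) :
    ∀ t, deriv (fun u => Real.log ((h u).trace.re + ((h u)⁻¹).trace.re)) t
      ≤ 2 * C :=
  stmt6_general r C h Φ hpos hΦherm hΦnorm hderiv
end
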